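/- arXiv:2410.18848 — 3 statements merged into one kernel-verified Lean document; each statement's English description precedes it below -/
import Mathlib

section
/- Let λ > 0, r₀ > 0, n_L > 0, b⊥₁ > 0, b⊥₂ > 0 be real numbers, let θ₀ ∈ (0, π/2), let A ∈ (0,1), and let γ₁, γ₂ be real numbers with A ≤ γ_k < 1 for k = 1,2. For k = 1,2 define the per-pair height error σ_{h,k} = (λ r₀ sin θ₀ / b⊥_k) · (1/(2π γ_k)) · √((1 − γ_k²)/(2 n_L)) and the weight w_k = 1/σ_{h,k}². Then the fused height error σ_h = √((w₁² σ_{h,1}² + w₂² σ_{h,2}²)/(w₁ + w₂)²) satisfies σ_h ≤ √( λ² r₀² sin²θ₀ (1 − A²) / (8 π² A² n_L (b⊥₁² + b⊥₂²)) ). -/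
open Real Finset

/-!
Inverse-variance weighting makes the fused variance `1 / ∑ₖ wₖ` with `wₖ = 1 / σ_{h,k}²`.
Since `(1 - γ²) / γ² = γ⁻² - 1` decreases in `γ`, each `σ_{h,k}²` is at most `B / b⊥ₖ²`,
where `B` is the same expression at the worst-case coherence `A`; hence `∑ₖ wₖ ≥ (∑ₖ b⊥ₖ²) / B`.
-/

theorem sum_inv_sq_mul_sq_div_sq {ι : Type*} (s : Finset ι) (σ : ι → ℝ) :
    (∑ i ∈ s, (1 / σ i ^ 2) ^ 2 * σ i ^ 2) / (∑ i ∈ s, 1 / σ i ^ 2) ^ 2 =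
      1 / ∑ i ∈ s, 1 / σ i ^ 2 := by
  have hterm (i : ι) : (1 / σ i ^ 2) ^ 2 * σ i ^ 2 = 1 / σ i ^ 2 := by
    rcases eq_or_ne (σ i) 0 with h | h
    · simp [h]
    · field_simp
  rw [sum_congr rfl fun i _ => hterm i, sq, div_self_mul_self', one_div]

theorem one_div_sum_one_div_le_div_sum {ι : Type*} {s : Finset ι} {v β : ι → ℝ} {B : ℝ}
    (hs : s.Nonempty) (hB : 0 < B) (hβ : ∀ i ∈ s, 0 < β i) (hv : ∀ i ∈ s, 0 < v i)
    (hvβ : ∀ i ∈ s, v i ≤ B / β i) :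
    1 / ∑ i ∈ s, 1 / v i ≤ B / ∑ i ∈ s, β i := by
  have hβsum : 0 < ∑ i ∈ s, β i := sum_pos hβ hs
  have hsum : (∑ i ∈ s, β i) / B ≤ ∑ i ∈ s, 1 / v i := by
    rw [sum_div]
    refine sum_le_sum fun i hi => ?_
    rw [← one_div_div]
    exact one_div_le_one_div_of_le (hv i hi) (hvβ i hi)
  calc 1 / ∑ i ∈ s, 1 / v i ≤ 1 / ((∑ i ∈ s, β i) / B) :=
        one_div_le_one_div_of_le (by positivity) hsum
    _ = B / ∑ i ∈ s, β i := one_div_div _ _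

theorem one_sub_sq_div_sq_le {A γ : ℝ} (hA : 0 < A) (hAγ : A ≤ γ) :
    (1 - γ ^ 2) / γ ^ 2 ≤ (1 - A ^ 2) / A ^ 2 := by
  have hγ : 0 < γ := hA.trans_le hAγ
  rw [sub_div, sub_div, div_self (by positivity), div_self (by positivity)]
  gcongr

/-- `h_amb · σ_Φ(γ) / 2π` with `h_amb = c / b⊥`, where `c = λ r₀ sin θ₀`. -/
noncomputable def heightError (c nL b γ : ℝ) : ℝ :=
  c / b * (1 / (2 * π * γ)) * √((1 - γ ^ 2) / (2 * nL))

section heightError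

variable {c nL b γ : ℝ}

theorem heightError_pos (hc : 0 < c) (hnL : 0 < nL) (hb : 0 < b) (hγ : 0 < γ) (hγ1 : γ < 1) :
    0 < heightError c nL b γ := by
  have : 0 < 1 - γ ^ 2 := by nlinarith
  unfold heightError
  positivity

theorem heightError_sq (hnL : 0 ≤ nL) (hγ : γ ^ 2 ≤ 1) :
    heightError c nL b γ ^ 2 = c ^ 2 / (8 * π ^ 2 * nL) / b ^ 2 * ((1 - γ ^ 2) / γ ^ 2) := by
  have : 0 ≤ (1 - γ ^ 2) / (2 * nL) := div_nonneg (by linarith) (by positivity)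
  rw [heightError, mul_pow, mul_pow, sq_sqrt this]
  field_simp
  ring

theorem heightError_sq_le {A : ℝ} (hnL : 0 ≤ nL) (hA : 0 < A) (hAγ : A ≤ γ) (hγ : γ ^ 2 ≤ 1) :
    heightError c nL b γ ^ 2 ≤ c ^ 2 * (1 - A ^ 2) / (8 * π ^ 2 * A ^ 2 * nL) / b ^ 2 := by
  rw [heightError_sq hnL hγ]
  calc c ^ 2 / (8 * π ^ 2 * nL) / b ^ 2 * ((1 - γ ^ 2) / γ ^ 2)
      ≤ c ^ 2 / (8 * π ^ 2 * nL) / b ^ 2 * ((1 - A ^ 2) / A ^ 2) :=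
        mul_le_mul_of_nonneg_left (one_sub_sq_div_sq_le hA hAγ) (by positivity)
    _ = c ^ 2 * (1 - A ^ 2) / (8 * π ^ 2 * A ^ 2 * nL) / b ^ 2 := by
        field_simp

end heightError

/-- Proposition 1: upper bound on the fused height error of a dual-baseline
InSAR system based on the worst-case coherence `A`. -/
theorem fused_height_error_upper_bound
    (lam r0 nL b1 b2 θ0 A γ1 γ2 σ1 σ2 w1 w2 σh : ℝ)
    (hlam : 0 < lam) (hr0 : 0 < r0) (hnL : 0 < nL)
    (hb1 : 0 < b1) (hb2 : 0 < b2)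
    (hθ0 : 0 < θ0 ∧ θ0 < π / 2)
    (hA : 0 < A ∧ A < 1)
    (hγ1 : A ≤ γ1 ∧ γ1 < 1) (hγ2 : A ≤ γ2 ∧ γ2 < 1)
    (hσ1 : σ1 = (lam * r0 * Real.sin θ0 / b1) * (1 / (2 * π * γ1)) *
      Real.sqrt ((1 - γ1 ^ 2) / (2 * nL)))
    (hσ2 : σ2 = (lam * r0 * Real.sin θ0 / b2) * (1 / (2 * π * γ2)) *
      Real.sqrt ((1 - γ2 ^ 2) / (2 * nL)))
    (hw1 : w1 = 1 / σ1 ^ 2) (hw2 : w2 = 1 / σ2 ^ 2)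
    (hσh : σh = Real.sqrt ((w1 ^ 2 * σ1 ^ 2 + w2 ^ 2 * σ2 ^ 2) / (w1 + w2) ^ 2)) :
    σh ≤ Real.sqrt (lam ^ 2 * r0 ^ 2 * Real.sin θ0 ^ 2 * (1 - A ^ 2) /
      (8 * π ^ 2 * A ^ 2 * nL * (b1 ^ 2 + b2 ^ 2))) := by
  obtain ⟨hA0, hA1⟩ := hA
  have hc : 0 < lam * r0 * sin θ0 :=
    mul_pos (mul_pos hlam hr0) (sin_pos_of_pos_of_lt_pi hθ0.1 (by linarith [pi_pos, hθ0.2]))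
  have hB : 0 < (lam * r0 * sin θ0) ^ 2 * (1 - A ^ 2) / (8 * π ^ 2 * A ^ 2 * nL) := by
    have h1A : 0 < 1 - A ^ 2 := by nlinarith
    exact div_pos (mul_pos (pow_pos hc 2) h1A) (by positivity)
  set B := (lam * r0 * sin θ0) ^ 2 * (1 - A ^ 2) / (8 * π ^ 2 * A ^ 2 * nL)
  have hσ : ∀ i : Fin 2, 0 < ![σ1, σ2] i ∧ ![σ1, σ2] i ^ 2 ≤ B / ![b1, b2] i ^ 2 := by
    intro i
    fin_cases i
    · subst hσ1
      exact ⟨heightError_pos hc hnL hb1 (hA0.trans_le hγ1.1) hγ1.2,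
        heightError_sq_le hnL.le hA0 hγ1.1 (by nlinarith)⟩
    · subst hσ2
      exact ⟨heightError_pos hc hnL hb2 (hA0.trans_le hγ2.1) hγ2.2,
        heightError_sq_le hnL.le hA0 hγ2.1 (by nlinarith)⟩
  have hfused := sum_inv_sq_mul_sq_div_sq univ ![σ1, σ2]
  have hbound := one_div_sum_one_div_le_div_sum (s := univ) (v := fun i => ![σ1, σ2] i ^ 2)
    (β := fun i => ![b1, b2] i ^ 2) univ_nonempty hB
    (fun i _ => pow_pos (by fin_cases i <;> assumption) 2)
    (fun i _ => pow_pos (hσ i).1 2) (fun i _ => (hσ i).2)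
  simp only [Fin.sum_univ_two, Matrix.cons_val_zero, Matrix.cons_val_one] at hfused hbound
  rw [hσh, hw1, hw2, hfused]
  refine sqrt_le_sqrt (hbound.trans_eq ?_)
  simp only [B]
  field_simp
end

section
/- Let B_p ∈ (0, 2), γ_min ∈ (0, 1), and set h = (γ_min B_p − 2 − B_p)/(B_p − 2 − γ_min B_p); assume 1 < h < 2. Let θ₀ ∈ (0, π/2), x_t ∈ ℝ, and let (x_k, z_k) ∈ ℝ² with z_k > 0 and x_k < x_t, and set θ_k = arctan((x_t − x_k)/z_k). Assume θ_k ≤ θ₀, and define f(x) = (1/B_p)·[(2 + B_p)/(1 + x) − (2 − B_p)·x/(1 + x)] and α_a = tan(arcsin(((2 − h)/h)·sin θ₀)). Then f( 2 sin θ₀/(sin θ₀ + sin θ_k) ) ≥ γ_min if and only if z_k·α_a − (x_t − x_k) ≤ 0. -/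
open Real

set_option maxHeartbeats 1000000 in
/-- Case (a) of Proposition 2: for `θ_k ≤ θ₀`, the baseline-decorrelation
constraint is equivalent to the linear constraint `z_k α_a − (x_t − x_k) ≤ 0`. -/
theorem prop2_case_a (Bp γmin h θ0 xt xk zk θk αa : ℝ)
    (hBp : 0 < Bp ∧ Bp < 2) (hγmin : 0 < γmin ∧ γmin < 1)
    (hh : h = (γmin * Bp - 2 - Bp) / (Bp - 2 - γmin * Bp))
    (hh' : 1 < h ∧ h < 2)
    (hθ0 : 0 < θ0 ∧ θ0 < π / 2)
    (hzk : 0 < zk) (hxk : xk < xt)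
    (hθk : θk = Real.arctan ((xt - xk) / zk))
    (hle : θk ≤ θ0)
    (hαa : αa = Real.tan (Real.arcsin (((2 - h) / h) * Real.sin θ0))) :
    (1 / Bp) * ((2 + Bp) / (1 + 2 * Real.sin θ0 / (Real.sin θ0 + Real.sin θk)) -
        (2 - Bp) * (2 * Real.sin θ0 / (Real.sin θ0 + Real.sin θk)) /
          (1 + 2 * Real.sin θ0 / (Real.sin θ0 + Real.sin θk))) ≥ γmin ↔
      zk * αa - (xt - xk) ≤ 0 := by
  obtain ⟨hBp1, hBp2⟩ := hBp
  obtain ⟨hγ1, hγ2⟩ := hγmin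
  obtain ⟨hh1, hh2⟩ := hh'
  obtain ⟨hθ01, hθ02⟩ := hθ0
  have hpi := Real.pi_pos
  set t : ℝ := (xt - xk) / zk with ht
  have htpos : 0 < t := div_pos (by linarith) hzk
  have hθk1 : 0 < θk := by rw [hθk, ← Real.arctan_zero]; exact Real.arctan_strictMono htpos
  have hθk2 : θk < π / 2 := hθk ▸ Real.arctan_lt_pi_div_two _
  have hs0 : 0 < Real.sin θ0 := Real.sin_pos_of_pos_of_lt_pi hθ01 (by linarith)
  have hsk : 0 < Real.sin θk := Real.sin_pos_of_pos_of_lt_pi hθk1 (by linarith)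
  have hs01 : Real.sin θ0 < 1 := by
    have := Real.strictMonoOn_sin ⟨by linarith, le_of_lt hθ02⟩
      (Set.mem_Icc.mpr ⟨by linarith, le_refl _⟩) hθ02
    simpa using this
  have hmono : Real.sin θk ≤ Real.sin θ0 :=
    Real.strictMonoOn_sin.monotoneOn ⟨by linarith, le_of_lt hθk2⟩
      ⟨by linarith, le_of_lt hθ02⟩ hle
  set D : ℝ := Real.sin θ0 + Real.sin θk with hD
  have hDpos : 0 < D := by positivity
  set X : ℝ := 2 * Real.sin θ0 / D with hXdef
  have hX1 : 1 ≤ X := by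
    rw [hXdef, le_div_iff₀ hDpos]; rw [hD]; linarith
  have hXpos : 0 < 1 + X := by linarith
  -- key fact about h
  have hden : Bp - 2 - γmin * Bp < 0 := by nlinarith
  have hkey : h * (2 - Bp + γmin * Bp) = 2 + Bp - γmin * Bp := by
    rw [hh, div_mul_eq_mul_div, div_eq_iff (ne_of_lt hden)]; ring
  have hfac : 0 < 2 - Bp + γmin * Bp := by nlinarith
  -- Step 1: the decorrelation constraint ↔ X ≤ h
  have step1 : (1 / Bp) * ((2 + Bp) / (1 + X) - (2 - Bp) * X / (1 + X)) ≥ γmin ↔ X ≤ h := by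
    have e1 : (1 / Bp) * ((2 + Bp) / (1 + X) - (2 - Bp) * X / (1 + X)) =
        ((2 + Bp) - (2 - Bp) * X) / (Bp * (1 + X)) := by
      field_simp
    rw [e1, ge_iff_le, le_div_iff₀ (by positivity)]
    constructor
    · intro hineq
      have : X * (2 - Bp + γmin * Bp) ≤ h * (2 - Bp + γmin * Bp) := by
        rw [hkey]; nlinarith
      exact le_of_mul_le_mul_right (by linarith [this]) hfac
    · intro hineq
      have : X * (2 - Bp + γmin * Bp) ≤ h * (2 - Bp + γmin * Bp) :=
        mul_le_mul_of_nonneg_right hineq (le_of_lt hfac)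
      rw [hkey] at this; nlinarith
  -- Step 2: X ≤ h ↔ ((2-h)/h) * sin θ0 ≤ sin θk
  set c : ℝ := ((2 - h) / h) * Real.sin θ0 with hc
  have hhpos : 0 < h := by linarith
  have step2 : X ≤ h ↔ c ≤ Real.sin θk := by
    rw [hXdef, div_le_iff₀ hDpos, hc, div_mul_eq_mul_div, div_le_iff₀ hhpos, hD]
    constructor <;> intro <;> nlinarith
  -- Step 3: c ≤ sin θk ↔ arcsin c ≤ θk
  have hc0 : 0 < c := by
    apply mul_pos _ hs0
    apply div_pos (by linarith) hhpos
  have hc1 : c < 1 := by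
    have h1 : (2 - h) / h < 1 := by rw [div_lt_one hhpos]; linarith
    have h2 := mul_lt_mul_of_pos_right h1 hs0
    rw [one_mul] at h2
    linarith
  have step3 : c ≤ Real.sin θk ↔ Real.arcsin c ≤ θk :=
    (Real.arcsin_le_iff_le_sin ⟨by linarith, le_of_lt hc1⟩
      ⟨by linarith, le_of_lt hθk2⟩).symm
  -- Step 4: arcsin c ≤ θk ↔ αa ≤ t
  have hφ1 : 0 < Real.arcsin c := Real.arcsin_pos.mpr hc0
  have hφ2 : Real.arcsin c < π / 2 := Real.arcsin_lt_pi_div_two.mpr hc1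
  have step4 : Real.arcsin c ≤ θk ↔ αa ≤ t := by
    rw [hαa]
    have : Real.tan (Real.arcsin c) ≤ Real.tan θk ↔ Real.arcsin c ≤ θk :=
      Real.strictMonoOn_tan.le_iff_le ⟨by linarith, hφ2⟩ ⟨by linarith, hθk2⟩
    rw [← this, hθk, Real.tan_arctan]
  -- Step 5: αa ≤ t ↔ zk * αa - (xt - xk) ≤ 0
  have step5 : αa ≤ t ↔ zk * αa - (xt - xk) ≤ 0 := by
    rw [ht, le_div_iff₀ hzk]
    constructor <;> intro h' <;> nlinarith [mul_comm αa zk]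
  rw [step1, step2, step3, step4, step5]
end

section
/- Let B_p ∈ (0, 2), γ_min ∈ (0, 1), and set h = (γ_min B_p − 2 − B_p)/(B_p − 2 − γ_min B_p); assume 0 < h < 2. Let θ₀ ∈ (0, π/2) with (h/(2 − h))·sin θ₀ < 1, let x_t ∈ ℝ, and let (x_k, z_k) ∈ ℝ² with z_k > 0 and x_k < x_t, and set θ_k = arctan((x_t − x_k)/z_k). Assume θ_k > θ₀, and define f(x) = (1/B_p)·[(2 + B_p)/(1 + x) − (2 − B_p)·x/(1 + x)] and α_b = tan(arcsin((h/(2 − h))·sin θ₀)). Then f( 2 sin θ_k/(sin θ₀ + sin θ_k) ) ≥ γ_min if and only if (x_t − x_k) − z_k·α_b ≤ 0. -/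
/-!
Clearing denominators, `f X ≥ γ_min` is the linear condition `X ≤ h`, and with
`X = 2 sin θ_k / (sin θ₀ + sin θ_k)` this reads `sin θ_k ≤ (h / (2 - h)) sin θ₀ = sin φ`
for `φ = arcsin ((h / (2 - h)) sin θ₀)`. Since `sin` and `tan` are both increasing on
`(-π/2, π/2)`, this is `tan θ_k ≤ tan φ = α_b`, and `tan θ_k = (x_t - x_k) / z_k`.
-/

open Real Set

lemma denominator_neg_of_div_pos {Bp γ : ℝ}
    (hpos : 0 < (γ * Bp - 2 - Bp) / (Bp - 2 - γ * Bp)) : Bp - 2 - γ * Bp < 0 := by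
  -- numerator and denominator sum to `-4`, so they cannot both be positive
  rcases div_pos_iff.mp hpos with ⟨hnum, hden⟩ | ⟨_, hden⟩
  · linarith
  · exact hden

lemma le_decorrelation_iff {Bp γ x : ℝ} (hBp : 0 < Bp) (hx : 0 < 1 + x)
    (hpos : 0 < (γ * Bp - 2 - Bp) / (Bp - 2 - γ * Bp)) :
    γ ≤ (1 / Bp) * ((2 + Bp) / (1 + x) - (2 - Bp) * x / (1 + x)) ↔
      x ≤ (γ * Bp - 2 - Bp) / (Bp - 2 - γ * Bp) := by
  have hf : (1 / Bp) * ((2 + Bp) / (1 + x) - (2 - Bp) * x / (1 + x)) =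
      ((2 + Bp) - (2 - Bp) * x) / (Bp * (1 + x)) := by
    field_simp
  rw [hf, le_div_iff₀ (by positivity), le_div_iff_of_neg (denominator_neg_of_div_pos hpos)]
  constructor <;> intro H <;> linarith

lemma two_mul_div_add_le_iff {a b h : ℝ} (hab : 0 < a + b) (h2 : h < 2) :
    2 * b / (a + b) ≤ h ↔ b ≤ h / (2 - h) * a := by
  rw [div_le_iff₀ hab, div_mul_eq_mul_div, le_div_iff₀ (by linarith)]
  constructor <;> intro H <;> linarith

lemma sin_le_iff_tan_le_tan_arcsin {θ c : ℝ} (hθ : θ ∈ Ioo (-(π / 2)) (π / 2))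
    (hc : c ∈ Ioo (-1) 1) : sin θ ≤ c ↔ tan θ ≤ tan (arcsin c) := by
  have harcsin : arcsin c ∈ Ioo (-(π / 2)) (π / 2) :=
    ⟨neg_pi_div_two_lt_arcsin.mpr hc.1, arcsin_lt_pi_div_two.mpr hc.2⟩
  rw [← le_arcsin_iff_sin_le (Ioo_subset_Icc_self hθ) (Ioo_subset_Icc_self hc),
    strictMonoOn_tan.le_iff_le hθ harcsin]

theorem prop2_case_b_general (Bp γmin h θ0 xt xk zk θk αb : ℝ)
    (hBp : 0 < Bp ∧ Bp < 2)
    (hh : h = (γmin * Bp - 2 - Bp) / (Bp - 2 - γmin * Bp))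
    (hh' : 0 < h ∧ h < 2)
    (hθ0 : 0 < θ0 ∧ θ0 < π / 2)
    (hsin : (h / (2 - h)) * Real.sin θ0 < 1)
    (hzk : 0 < zk)
    (hθk : θk = Real.arctan ((xt - xk) / zk))
    (hgt : θ0 < θk)
    (hαb : αb = Real.tan (Real.arcsin ((h / (2 - h)) * Real.sin θ0))) :
    (1 / Bp) * ((2 + Bp) / (1 + 2 * Real.sin θk / (Real.sin θ0 + Real.sin θk)) -
        (2 - Bp) * (2 * Real.sin θk / (Real.sin θ0 + Real.sin θk)) /
          (1 + 2 * Real.sin θk / (Real.sin θ0 + Real.sin θk))) ≥ γmin ↔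
      (xt - xk) - zk * αb ≤ 0 := by
  have hθk_mem : θk ∈ Ioo (-(π / 2)) (π / 2) :=
    hθk ▸ ⟨neg_pi_div_two_lt_arctan _, arctan_lt_pi_div_two _⟩
  have hs0 : 0 < sin θ0 := sin_pos_of_pos_of_lt_pi hθ0.1 (by linarith [pi_pos])
  have hsk : 0 < sin θk :=
    sin_pos_of_pos_of_lt_pi (hθ0.1.trans hgt) (by linarith [hθk_mem.2, pi_pos])
  have hc_pos : 0 < h / (2 - h) * sin θ0 := mul_pos (div_pos hh'.1 (by linarith [hh'.2])) hs0
  have hc_mem : h / (2 - h) * sin θ0 ∈ Ioo (-1) 1 := ⟨by linarith, hsin⟩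
  subst hh
  rw [ge_iff_le, le_decorrelation_iff hBp.1 (by positivity) hh'.1,
    two_mul_div_add_le_iff (by positivity) hh'.2, sin_le_iff_tan_le_tan_arcsin hθk_mem hc_mem,
    hθk, tan_arctan, ← hαb, sub_nonpos, div_le_iff₀ hzk, mul_comm]

/-- Case (b) of Proposition 2: for `θ_k > θ₀`, the baseline-decorrelation
constraint is equivalent to the linear constraint `(x_t − x_k) − z_k α_b ≤ 0`. -/
theorem prop2_case_b (Bp γmin h θ0 xt xk zk θk αb : ℝ)
    (hBp : 0 < Bp ∧ Bp < 2) (hγmin : 0 < γmin ∧ γmin < 1)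
    (hh : h = (γmin * Bp - 2 - Bp) / (Bp - 2 - γmin * Bp))
    (hh' : 0 < h ∧ h < 2)
    (hθ0 : 0 < θ0 ∧ θ0 < π / 2)
    (hsin : (h / (2 - h)) * Real.sin θ0 < 1)
    (hzk : 0 < zk) (hxk : xk < xt)
    (hθk : θk = Real.arctan ((xt - xk) / zk))
    (hgt : θ0 < θk)
    (hαb : αb = Real.tan (Real.arcsin ((h / (2 - h)) * Real.sin θ0))) :
    (1 / Bp) * ((2 + Bp) / (1 + 2 * Real.sin θk / (Real.sin θ0 + Real.sin θk)) -
        (2 - Bp) * (2 * Real.sin θk / (Real.sin θ0 + Real.sin θk)) /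
          (1 + 2 * Real.sin θk / (Real.sin θ0 + Real.sin θk))) ≥ γmin ↔
      (xt - xk) - zk * αb ≤ 0 :=
  prop2_case_b_general Bp γmin h θ0 xt xk zk θk αb hBp hh hh' hθ0 hsin hzk hθk hgt hαb
end
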